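/- (Marsden identity for the alternative cubic S-basis.) Let T3 ∈ ℝ^{16×16} be the identity matrix except that its principal submatrix on rows and columns (13, 14, 15, 16) equals [[3/4, 0, 0, 1/4], [0, 3/4, 0, 1/4], [0, 0, 3/4, 1/4], [0, 0, 0, 1]]. Then for all y ∈ ℝ², T3·ψ̃3(y) = ψ3(y). -/

import Mathlib

/-!
Since `c_p(y) = 1 - p·y` is affine in `p`, we have `c₄ = (c₁ + c₂)/2`, `c₁₀ = (c₁ + c₂ + c₃)/3`,
and so on. `T3` only changes rows 13–15, and there the claim is the polynomial identity
`c₁ (c₁ + c₂)(c₁ + c₃) = c₁² (c₁ + c₂ + c₃) + c₁ c₂ c₃` and its two cyclic shifts.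
-/

/-- Euclidean inner product on `ℝ²`. -/
def dotR2 (x y : ℝ × ℝ) : ℝ := x.1 * y.1 + x.2 * y.2

/-- The linear polynomial `c_p(y) = 1 − p·y` attached to a point `p`. -/
noncomputable def cpl (p y : ℝ × ℝ) : ℝ := 1 - dotR2 p y

/-- The 16×16 matrix `T3`: the identity except that its principal submatrix on
rows/columns (13,14,15,16) (1-based; here 0-based indices 12,13,14,15) is
`[[3/4,0,0,1/4],[0,3/4,0,1/4],[0,0,3/4,1/4],[0,0,0,1]]`. -/
noncomputable def T3 : Matrix (Fin 16) (Fin 16) ℝ :=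
  Matrix.of fun i j =>
    if i = 12 then (if j = 12 then 3/4 else if j = 15 then 1/4 else 0)
    else if i = 13 then (if j = 13 then 3/4 else if j = 15 then 1/4 else 0)
    else if i = 14 then (if j = 14 then 3/4 else if j = 15 then 1/4 else 0)
    else if i = j then 1 else 0

lemma cpl_midpoint (p q y : ℝ × ℝ) :
    cpl ((2⁻¹ : ℝ) • (p + q)) y = 2⁻¹ * (cpl p y + cpl q y) := by
  simp only [cpl, dotR2, Prod.smul_fst, Prod.smul_snd, Prod.fst_add, Prod.snd_add, smul_eq_mul]
  ring

lemma cpl_centroid (p q r y : ℝ × ℝ) :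
    cpl ((3⁻¹ : ℝ) • (p + q + r)) y = 3⁻¹ * (cpl p y + cpl q y + cpl r y) := by
  simp only [cpl, dotR2, Prod.smul_fst, Prod.smul_snd, Prod.fst_add, Prod.snd_add, smul_eq_mul]
  ring

lemma T3_mulVec (a0 a1 a2 a3 a4 a5 a6 a7 a8 a9 a10 a11 a12 a13 a14 a15 : ℝ) :
    T3.mulVec ![a0, a1, a2, a3, a4, a5, a6, a7, a8, a9, a10, a11, a12, a13, a14, a15] =
      ![a0, a1, a2, a3, a4, a5, a6, a7, a8, a9, a10, a11,
        3/4 * a12 + 1/4 * a15, 3/4 * a13 + 1/4 * a15, 3/4 * a14 + 1/4 * a15, a15] := by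
  ext i
  fin_cases i <;> simp [T3, Matrix.mulVec, dotProduct, Fin.sum_univ_succ]

theorem marsden_alternative_cubic_general
    (p1 p2 p3 : ℝ × ℝ)
    (p4 p5 p6 p10 : ℝ × ℝ)
    (h4 : p4 = (2⁻¹ : ℝ) • (p1 + p2))
    (h5 : p5 = (2⁻¹ : ℝ) • (p2 + p3))
    (h6 : p6 = (2⁻¹ : ℝ) • (p3 + p1))
    (h10 : p10 = (3⁻¹ : ℝ) • (p1 + p2 + p3)) :
    ∀ y : ℝ × ℝ,
      T3.mulVec
        ![cpl p1 y ^ 3, cpl p1 y ^ 2 * cpl p4 y, cpl p1 y * cpl p2 y * cpl p4 y,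
          cpl p2 y ^ 2 * cpl p4 y, cpl p2 y ^ 3, cpl p2 y ^ 2 * cpl p5 y,
          cpl p2 y * cpl p3 y * cpl p5 y, cpl p3 y ^ 2 * cpl p5 y, cpl p3 y ^ 3,
          cpl p3 y ^ 2 * cpl p6 y, cpl p1 y * cpl p3 y * cpl p6 y, cpl p1 y ^ 2 * cpl p6 y,
          cpl p1 y ^ 2 * cpl p10 y, cpl p2 y ^ 2 * cpl p10 y, cpl p3 y ^ 2 * cpl p10 y,
          cpl p1 y * cpl p2 y * cpl p3 y] =
        ![cpl p1 y ^ 3, cpl p1 y ^ 2 * cpl p4 y, cpl p1 y * cpl p2 y * cpl p4 y,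
          cpl p2 y ^ 2 * cpl p4 y, cpl p2 y ^ 3, cpl p2 y ^ 2 * cpl p5 y,
          cpl p2 y * cpl p3 y * cpl p5 y, cpl p3 y ^ 2 * cpl p5 y, cpl p3 y ^ 3,
          cpl p3 y ^ 2 * cpl p6 y, cpl p1 y * cpl p3 y * cpl p6 y, cpl p1 y ^ 2 * cpl p6 y,
          cpl p1 y * cpl p4 y * cpl p6 y, cpl p2 y * cpl p4 y * cpl p5 y,
          cpl p3 y * cpl p5 y * cpl p6 y, cpl p1 y * cpl p2 y * cpl p3 y] := by
  intro y
  subst h4 h5 h6 h10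
  rw [T3_mulVec]
  simp only [cpl_midpoint, cpl_centroid, Matrix.vecCons_inj, true_and, and_true]
  refine ⟨?_, ?_, ?_⟩ <;> ring

/-- Marsden identity for the alternative cubic S-basis:
`T3 ψ̃3(y) = ψ3(y)` for all `y`. -/
theorem marsden_alternative_cubic
    (p1 p2 p3 : ℝ × ℝ)
    (hind : AffineIndependent ℝ ![p1, p2, p3])
    (p4 p5 p6 p10 : ℝ × ℝ)
    (h4 : p4 = (2⁻¹ : ℝ) • (p1 + p2))
    (h5 : p5 = (2⁻¹ : ℝ) • (p2 + p3))
    (h6 : p6 = (2⁻¹ : ℝ) • (p3 + p1))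
    (h10 : p10 = (3⁻¹ : ℝ) • (p1 + p2 + p3)) :
    ∀ y : ℝ × ℝ,
      T3.mulVec
        ![cpl p1 y ^ 3, cpl p1 y ^ 2 * cpl p4 y, cpl p1 y * cpl p2 y * cpl p4 y,
          cpl p2 y ^ 2 * cpl p4 y, cpl p2 y ^ 3, cpl p2 y ^ 2 * cpl p5 y,
          cpl p2 y * cpl p3 y * cpl p5 y, cpl p3 y ^ 2 * cpl p5 y, cpl p3 y ^ 3,
          cpl p3 y ^ 2 * cpl p6 y, cpl p1 y * cpl p3 y * cpl p6 y, cpl p1 y ^ 2 * cpl p6 y,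
          cpl p1 y ^ 2 * cpl p10 y, cpl p2 y ^ 2 * cpl p10 y, cpl p3 y ^ 2 * cpl p10 y,
          cpl p1 y * cpl p2 y * cpl p3 y] =
        ![cpl p1 y ^ 3, cpl p1 y ^ 2 * cpl p4 y, cpl p1 y * cpl p2 y * cpl p4 y,
          cpl p2 y ^ 2 * cpl p4 y, cpl p2 y ^ 3, cpl p2 y ^ 2 * cpl p5 y,
          cpl p2 y * cpl p3 y * cpl p5 y, cpl p3 y ^ 2 * cpl p5 y, cpl p3 y ^ 3,
          cpl p3 y ^ 2 * cpl p6 y, cpl p1 y * cpl p3 y * cpl p6 y, cpl p1 y ^ 2 * cpl p6 y,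
          cpl p1 y * cpl p4 y * cpl p6 y, cpl p2 y * cpl p4 y * cpl p5 y,
          cpl p3 y * cpl p5 y * cpl p6 y, cpl p1 y * cpl p2 y * cpl p3 y] :=
  marsden_alternative_cubic_general p1 p2 p3 p4 p5 p6 p10 h4 h5 h6 h10
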